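/- arXiv:1111.0689 — 2 statements merged into one kernel-verified Lean document; each statement's English description precedes it below -/
import Mathlib

section
/- Han's subset entropy inequality (Theorem 1): Let L ≥ 2 and let X_1,…,X_L be jointly distributed random variables each taking values in a finite set. Then for every α ∈ {2,…,L}, (1/C(L,α−1)) · ∑_{V ∈ Ω_L^{(α−1)}} H(X_V)/(α−1) ≥ (1/C(L,α)) · ∑_{U ∈ Ω_L^{(α)}} H(X_U)/α, where C(L,k) is the binomial coefficient. -/
open MeasureTheory ProbabilityTheory

noncomputable def entH {Ω : Type*} [MeasurableSpace Ω] (μ : Measure Ω)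
    {S : Type*} [Fintype S] (X : Ω → S) : ℝ :=
  ∑ s : S, Real.negMulLog ((μ (X ⁻¹' {s})).toReal)

noncomputable def condEntH {Ω : Type*} [MeasurableSpace Ω] (μ : Measure Ω)
    {S T : Type*} [Fintype S] [Fintype T] (X : Ω → S) (Y : Ω → T) : ℝ :=
  entH μ (fun ω => (X ω, Y ω)) - entH μ Y

def jointOn {Ω : Type*} {ι : Type*} {S : ι → Type*} (X : ∀ i, Ω → S i) (U : Finset ι) :
    Ω → ((i : U) → S i) := fun ω i => X i ω

noncomputable def entHset {Ω : Type*} [MeasurableSpace Ω] (μ : Measure Ω)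
    {ι : Type*} [DecidableEq ι] {S : ι → Type*} [∀ i, Fintype (S i)]
    (X : ∀ i, Ω → S i) (U : Finset ι) : ℝ :=
  entH μ (jointOn X U)

noncomputable def condEntHset {Ω : Type*} [MeasurableSpace Ω] (μ : Measure Ω)
    {ι : Type*} [DecidableEq ι] {S : ι → Type*} [∀ i, Fintype (S i)]
    (X : ∀ i, Ω → S i) (U A : Finset ι) : ℝ :=
  condEntH μ (jointOn X U) (jointOn X A)

/-!
Submodularity of entropy, `H(X_{A ∪ B}) + H(X_{A ∩ B}) ≤ H(X_A) + H(X_B)`, is Gibbs' inequality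
comparing the law of `X_{A ∪ B}` with the law under which `X_A` and `X_B` are conditionally
independent given `X_{A ∩ B}`. Applied to `(V ∪ {j}) \ {i}` and `V`, it gives by induction on
`U` Han's inequality `(|U| - 1) H(X_U) ≤ ∑_{i ∈ U} H(X_{U \ {i}})`. Summing over all
`α`-subsets counts every `(α - 1)`-subset `L - α + 1` times, and
`C(L, α) α = C(L, α - 1) (L - α + 1)` turns this into the comparison of the averages.
-/

open Finset Real

theorem Real.negMulLog_le_neg_mul_log_add_sub {p q : ℝ} (hp : 0 ≤ p) (hq : 0 < q) :
    negMulLog p ≤ -(p * log q) + (q - p) := by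
  rcases hp.eq_or_lt with rfl | hp
  · simpa using hq.le
  have key : p * log (q / p) ≤ p * (q / p - 1) :=
    mul_le_mul_of_nonneg_left (log_le_sub_one_of_pos (div_pos hq hp)) hp.le
  rw [log_div hq.ne' hp.ne', mul_sub, mul_sub, mul_div_cancel₀ _ hp.ne'] at key
  rw [negMulLog]
  linarith

theorem Finset.sum_powersetCard_succ_sum_erase {ι M : Type*} [DecidableEq ι] [AddCommMonoid M]
    (s : Finset ι) (k : ℕ) (g : Finset ι → M) :
    ∑ U ∈ s.powersetCard (k + 1), ∑ i ∈ U, g (U.erase i) =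
      ∑ V ∈ s.powersetCard k, (#s - k) • g V := by
  rw [sum_sigma']
  have hcard : ∀ V ∈ s.powersetCard k, (#s - k) • g V = ∑ _i ∈ s \ V, g V := by
    intro V hV
    rw [mem_powersetCard] at hV
    rw [sum_const, card_sdiff_of_subset hV.1, hV.2]
  rw [sum_congr rfl hcard, sum_sigma']
  refine sum_bij' (fun p _ => ⟨p.1.erase p.2, p.2⟩) (fun p _ => ⟨insert p.2 p.1, p.2⟩)
    ?_ ?_ ?_ ?_ (fun _ _ => rfl)
  · rintro ⟨U, i⟩ h
    simp only [mem_sigma, mem_powersetCard, mem_sdiff] at h ⊢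
    refine ⟨⟨(erase_subset i U).trans h.1.1, ?_⟩, h.1.1 h.2, notMem_erase i U⟩
    rw [card_erase_of_mem h.2, h.1.2, Nat.add_sub_cancel]
  · rintro ⟨V, i⟩ h
    simp only [mem_sigma, mem_powersetCard, mem_sdiff] at h ⊢
    exact ⟨⟨insert_subset h.2.1 h.1.1, by rw [card_insert_of_notMem h.2.2, h.1.2]⟩,
      mem_insert_self i V⟩
  · rintro ⟨U, i⟩ h
    simp only [mem_sigma] at h
    simp [insert_erase h.2]
  · rintro ⟨V, i⟩ h
    simp only [mem_sigma, mem_sdiff] at h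
    simp [erase_insert h.2.2]

section Entropy

variable {Ω : Type*} [MeasurableSpace Ω] (μ : Measure Ω)

theorem entH_eq_sum_negMulLog {S : Type*} [Fintype S] (X : Ω → S) :
    entH μ X = ∑ s, negMulLog (μ.real (X ⁻¹' {s})) := rfl

theorem entH_nonneg [IsProbabilityMeasure μ] {S : Type*} [Fintype S] (X : Ω → S) :
    0 ≤ entH μ X :=
  sum_nonneg fun _ _ => negMulLog_nonneg measureReal_nonneg measureReal_le_one

theorem entH_comp_of_injective {S T : Type*} [Fintype S] [Fintype T] (X : Ω → S) {g : S → T}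
    (hg : Function.Injective g) : entH μ (g ∘ X) = entH μ X := by
  classical
  rw [entH_eq_sum_negMulLog, ← sum_subset (subset_univ (univ.image g)), sum_image hg.injOn]
  · refine sum_congr rfl fun s _ => ?_
    rw [Set.preimage_comp, ← Set.image_singleton, hg.preimage_image]
    rfl
  · intro t _ ht
    have : g ∘ X ⁻¹' {t} = ∅ :=
      Set.eq_empty_of_forall_notMem fun ω h =>
        ht (Set.mem_singleton_iff.mp h ▸ mem_image_of_mem g (mem_univ (X ω)))
    simp [this]

variable [IsFiniteMeasure μ]

theorem measureReal_preimage_singleton_le_comp {S T : Type*} (X : Ω → S) (f : S → T) (s : S) :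
    μ.real (X ⁻¹' {s}) ≤ μ.real (f ∘ X ⁻¹' {f s}) :=
  measureReal_mono fun ω (h : X ω = s) => show f (X ω) = f s by rw [h]

theorem sum_measureReal_preimage_singleton_univ {S : Type*} [Fintype S] [MeasurableSpace S]
    [MeasurableSingletonClass S] {X : Ω → S} (hX : Measurable X) :
    ∑ s, μ.real (X ⁻¹' {s}) = μ.real Set.univ := by
  rw [sum_measureReal_preimage_singleton _ fun s _ => hX (measurableSet_singleton s)]
  simp

theorem sum_measureReal_preimage_prodMk_singleton {S T : Type*} [Fintype S] [MeasurableSpace S]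
    [MeasurableSingletonClass S] {X : Ω → S} (hX : Measurable X) (Y : Ω → T) (t : T) :
    ∑ s, μ.real ((fun ω => (X ω, Y ω)) ⁻¹' {(s, t)}) = μ.real (Y ⁻¹' {t}) := by
  have hpre : ∀ s, (fun ω => (X ω, Y ω)) ⁻¹' {(s, t)} = X ⁻¹' {s} ∩ Y ⁻¹' {t} := fun s => by
    rw [← Set.singleton_prod_singleton, Set.mk_preimage_prod]
  simp_rw [hpre, ← measureReal_restrict_apply (hX (measurableSet_singleton _))]
  rw [sum_measureReal_preimage_singleton_univ _ hX, measureReal_restrict_apply_univ]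

theorem entH_comp_eq_sum {S T : Type*} [Fintype S] [Fintype T] [MeasurableSpace S]
    [MeasurableSingletonClass S] {X : Ω → S} (hX : Measurable X) (f : S → T) :
    entH μ (f ∘ X) = ∑ s, -(μ.real (X ⁻¹' {s}) * log (μ.real (f ∘ X ⁻¹' {f s}))) := by
  classical
  have hfiber : ∀ t, μ.real (f ∘ X ⁻¹' {t}) = ∑ s with f s = t, μ.real (X ⁻¹' {s}) := fun t => by
    rw [sum_measureReal_preimage_singleton _ fun s _ => hX (measurableSet_singleton s)]
    congr 1
    ext ω
    simp
  rw [entH_eq_sum_negMulLog, ← sum_fiberwise univ f]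
  refine sum_congr rfl fun t _ => ?_
  rw [sum_congr rfl fun s hs => by rw [(mem_filter.mp hs).2], sum_neg_distrib, ← sum_mul,
    ← hfiber, negMulLog, neg_mul]

end Entropy

section Submodularity

variable {Ω : Type*} [MeasurableSpace Ω] (μ : Measure Ω) [IsFiniteMeasure μ]
  {A B C : Type*} [Fintype A] [Fintype B] [Fintype C]
  [MeasurableSpace A] [MeasurableSingletonClass A] [MeasurableSpace B] [MeasurableSingletonClass B]
  [MeasurableSpace C] [MeasurableSingletonClass C] {X : Ω → A} {Y : Ω → B} {Z : Ω → C}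

theorem sum_measureReal_mul_div_eq_measureReal_univ (hX : Measurable X) (hY : Measurable Y)
    (hZ : Measurable Z) :
    ∑ t : A × B × C, μ.real ((fun ω => (X ω, Z ω)) ⁻¹' {(t.1, t.2.2)}) *
        μ.real ((fun ω => (Y ω, Z ω)) ⁻¹' {(t.2.1, t.2.2)}) / μ.real (Z ⁻¹' {t.2.2}) =
      μ.real Set.univ := by
  calc _ = ∑ c : C, ∑ a : A, ∑ b : B, μ.real ((fun ω => (X ω, Z ω)) ⁻¹' {(a, c)}) *
        μ.real ((fun ω => (Y ω, Z ω)) ⁻¹' {(b, c)}) / μ.real (Z ⁻¹' {c}) := by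
        simp only [Fintype.sum_prod_type]
        exact (sum_congr rfl fun _ _ => sum_comm).trans sum_comm
    _ = ∑ c, μ.real (Z ⁻¹' {c}) * μ.real (Z ⁻¹' {c}) / μ.real (Z ⁻¹' {c}) := by
        simp_rw [← sum_div, ← sum_mul_sum, sum_measureReal_preimage_prodMk_singleton μ hX,
          sum_measureReal_preimage_prodMk_singleton μ hY]
    _ = μ.real Set.univ := by
        simp_rw [mul_self_div_self, sum_measureReal_preimage_singleton_univ μ hZ]

theorem entH_prod_add_entH_le (hX : Measurable X) (hY : Measurable Y) (hZ : Measurable Z) :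
    entH μ (fun ω => (X ω, Y ω, Z ω)) + entH μ Z ≤
      entH μ (fun ω => (X ω, Z ω)) + entH μ (fun ω => (Y ω, Z ω)) := by
  set W : Ω → A × B × C := fun ω => (X ω, Y ω, Z ω)
  have hW : Measurable W := hX.prodMk (hY.prodMk hZ)
  set p : A × B × C → ℝ := fun t => μ.real (W ⁻¹' {t})
  set F : A × B × C → ℝ := fun t => μ.real ((fun ω => (X ω, Z ω)) ⁻¹' {(t.1, t.2.2)})
  set G : A × B × C → ℝ := fun t => μ.real ((fun ω => (Y ω, Z ω)) ⁻¹' {(t.2.1, t.2.2)})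
  set K : A × B × C → ℝ := fun t => μ.real (Z ⁻¹' {t.2.2})
  have hXZ : entH μ (fun ω => (X ω, Z ω)) = ∑ t, -(p t * log (F t)) :=
    entH_comp_eq_sum μ hW fun t => (t.1, t.2.2)
  have hYZ : entH μ (fun ω => (Y ω, Z ω)) = ∑ t, -(p t * log (G t)) :=
    entH_comp_eq_sum μ hW fun t => (t.2.1, t.2.2)
  have hZ' : entH μ Z = ∑ t, -(p t * log (K t)) := entH_comp_eq_sum μ hW fun t => t.2.2
  -- Gibbs' inequality against `F * G / K`, the law of `(X, Y, Z)` if `X` and `Y` were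
  -- conditionally independent given `Z`.
  have hpoint : ∀ t, negMulLog (p t) + -(p t * log (K t)) ≤
      -(p t * log (F t)) + -(p t * log (G t)) + (F t * G t / K t - p t) := by
    intro t
    have hp0 : 0 ≤ p t := measureReal_nonneg
    rcases hp0.eq_or_lt with h0 | hp
    · rw [← h0]
      simp only [negMulLog_zero, zero_mul, neg_zero, sub_zero, add_zero]
      positivity
    have hF : 0 < F t :=
      hp.trans_le (measureReal_preimage_singleton_le_comp μ W (fun t => (t.1, t.2.2)) t)
    have hG : 0 < G t :=
      hp.trans_le (measureReal_preimage_singleton_le_comp μ W (fun t => (t.2.1, t.2.2)) t)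
    have hK : 0 < K t :=
      hp.trans_le (measureReal_preimage_singleton_le_comp μ W (fun t => t.2.2) t)
    have := negMulLog_le_neg_mul_log_add_sub hp.le (div_pos (mul_pos hF hG) hK)
    rw [log_div (mul_pos hF hG).ne' hK.ne', log_mul hF.ne' hG.ne'] at this
    linarith
  have hmass : ∑ t, F t * G t / K t = ∑ t, p t := by
    rw [sum_measureReal_mul_div_eq_measureReal_univ μ hX hY hZ,
      sum_measureReal_preimage_singleton_univ μ hW]
  have hsum := sum_le_sum fun t (_ : t ∈ univ) => hpoint t
  simp only [sum_add_distrib, sum_sub_distrib, hmass, sub_self, add_zero] at hsum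
  rw [hXZ, hYZ, hZ', entH_eq_sum_negMulLog]
  exact hsum

end Submodularity

theorem entH_prod_comp_self {Ω S T : Type*} [MeasurableSpace Ω] (μ : Measure Ω) [Fintype S]
    [Fintype T] (X : Ω → S) (g : S → T) : entH μ (fun ω => (X ω, g (X ω))) = entH μ X :=
  entH_comp_of_injective μ X (g := fun s => (s, g s)) fun _ _ h => congrArg Prod.fst h

theorem measurable_jointOn {Ω ι : Type*} [MeasurableSpace Ω] {S : ι → Type*}
    [∀ i, MeasurableSpace (S i)] {X : ∀ i, Ω → S i} (hX : ∀ i, Measurable (X i)) (U : Finset ι) :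
    Measurable (jointOn X U) :=
  measurable_pi_lambda _ fun i => hX i

section SubsetEntropy

variable {Ω : Type*} [MeasurableSpace Ω] (μ : Measure Ω) {ι : Type*} [DecidableEq ι]
  {S : ι → Type*} [∀ i, Fintype (S i)] [∀ i, MeasurableSpace (S i)]
  [∀ i, MeasurableSingletonClass (S i)] {X : ∀ i, Ω → S i}

theorem entHset_union_add_entHset_inter_le [IsFiniteMeasure μ] (hX : ∀ i, Measurable (X i))
    (A B : Finset ι) :
    entHset μ X (A ∪ B) + entHset μ X (A ∩ B) ≤ entHset μ X A + entHset μ X B := by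
  have hunion : entH μ (fun ω => (jointOn X A ω, jointOn X B ω, jointOn X (A ∩ B) ω)) =
      entHset μ X (A ∪ B) := by
    refine entH_comp_of_injective μ (jointOn X (A ∪ B)) (g := fun f =>
      (restrict₂ subset_union_left f, restrict₂ subset_union_right f,
        restrict₂ (inter_subset_left.trans subset_union_left) f)) fun f f' h => ?_
    funext ⟨i, hi⟩
    rcases mem_union.mp hi with hA | hB
    · exact congrFun (congrArg Prod.fst h) ⟨i, hA⟩
    · exact congrFun (congrArg (fun x => x.2.1) h) ⟨i, hB⟩
  have hA : entH μ (fun ω => (jointOn X A ω, jointOn X (A ∩ B) ω)) = entHset μ X A :=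
    entH_prod_comp_self μ _ (restrict₂ inter_subset_left)
  have hB : entH μ (fun ω => (jointOn X B ω, jointOn X (A ∩ B) ω)) = entHset μ X B :=
    entH_prod_comp_self μ _ (restrict₂ inter_subset_right)
  have h := entH_prod_add_entH_le μ (measurable_jointOn hX A) (measurable_jointOn hX B)
    (measurable_jointOn hX (A ∩ B))
  rwa [hunion, hA, hB] at h

theorem card_sub_one_mul_entHset_le_sum_erase [IsProbabilityMeasure μ]
    (hX : ∀ i, Measurable (X i)) (U : Finset ι) :
    ((#U : ℝ) - 1) * entHset μ X U ≤ ∑ i ∈ U, entHset μ X (U.erase i) := by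
  induction U using Finset.induction_on with
  | empty => simpa [entHset] using entH_nonneg μ (jointOn X ∅)
  | @insert j V hj ih =>
    have hstep : ∀ i ∈ V, entHset μ X (insert j V) + entHset μ X (V.erase i) ≤
        entHset μ X V + entHset μ X ((insert j V).erase i) := by
      intro i hi
      have hji : j ≠ i := (ne_of_mem_of_not_mem hi hj).symm
      have hunion : (insert j V).erase i ∪ V = insert j V := by
        rw [erase_insert_of_ne hji, insert_union, union_eq_right.mpr (erase_subset i V)]
      have hinter : (insert j V).erase i ∩ V = V.erase i := by
        rw [erase_insert_of_ne hji, insert_inter_of_notMem hj,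
          inter_eq_left.mpr (erase_subset i V)]
      have h := entHset_union_add_entHset_inter_le μ hX ((insert j V).erase i) V
      rw [hunion, hinter] at h
      linarith
    have hsum := sum_le_sum hstep
    simp only [sum_add_distrib, sum_const, nsmul_eq_mul] at hsum
    rw [sum_insert hj, erase_insert hj, card_insert_of_notMem hj]
    push_cast
    linarith

theorem mul_sum_entHset_powersetCard_succ_le [IsProbabilityMeasure μ]
    (hX : ∀ i, Measurable (X i)) (s : Finset ι) (k : ℕ) :
    (k : ℝ) * ∑ U ∈ s.powersetCard (k + 1), entHset μ X U ≤
      ((#s - k : ℕ) : ℝ) * ∑ V ∈ s.powersetCard k, entHset μ X V := by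
  calc _ = ∑ U ∈ s.powersetCard (k + 1), ((#U : ℝ) - 1) * entHset μ X U := by
        rw [mul_sum]
        refine sum_congr rfl fun U hU => ?_
        rw [(mem_powersetCard.mp hU).2]
        push_cast
        ring
    _ ≤ ∑ U ∈ s.powersetCard (k + 1), ∑ i ∈ U, entHset μ X (U.erase i) :=
        sum_le_sum fun U _ => card_sub_one_mul_entHset_le_sum_erase μ hX U
    _ = _ := by
        rw [sum_powersetCard_succ_sum_erase, mul_sum]
        simp only [nsmul_eq_mul]

end SubsetEntropy

theorem han_subset_entropy_inequality_general
    {Ω : Type*} [MeasurableSpace Ω] (μ : Measure Ω) [IsProbabilityMeasure μ]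
    {L : ℕ} {S : Fin L → Type*} [∀ l, Fintype (S l)]
    [∀ l, MeasurableSpace (S l)] [∀ l, MeasurableSingletonClass (S l)]
    (X : ∀ l, Ω → S l) (hX : ∀ l, Measurable (X l))
    (α : ℕ) (hα1 : 2 ≤ α) (hα2 : α ≤ L) :
    (1 / (Nat.choose L (α - 1) : ℝ)) *
        ∑ V ∈ Finset.powersetCard (α - 1) (Finset.univ : Finset (Fin L)),
          entHset μ X V / ((α : ℝ) - 1) ≥
      (1 / (Nat.choose L α : ℝ)) *
        ∑ U ∈ Finset.powersetCard α (Finset.univ : Finset (Fin L)),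
          entHset μ X U / (α : ℝ) := by
  obtain ⟨k, rfl⟩ : ∃ k, α = k + 1 := ⟨α - 1, by omega⟩
  simp only [Nat.add_sub_cancel, Nat.cast_add_one, add_sub_cancel_right, ← sum_div]
  have hhan := mul_sum_entHset_powersetCard_succ_le μ hX univ k
  rw [card_univ, Fintype.card_fin] at hhan
  have hbin : ((k : ℝ) + 1) * L.choose (k + 1) = L.choose k * ((L - k : ℕ) : ℝ) := by
    rw [mul_comm]
    exact_mod_cast Nat.choose_succ_right_eq L k
  have hk : (0 : ℝ) < k := by exact_mod_cast (by omega : 0 < k)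
  have hchoose : (0 : ℝ) < L.choose k := by exact_mod_cast Nat.choose_pos (by omega)
  have hLk : (0 : ℝ) < ((L - k : ℕ) : ℝ) := by exact_mod_cast (by omega : 0 < L - k)
  rw [ge_iff_le, one_div_mul_eq_div, one_div_mul_eq_div, div_div, div_div, hbin,
    div_le_div_iff₀ (by positivity) (by positivity)]
  linear_combination mul_le_mul_of_nonneg_left hhan hchoose.le

/-- **Han's subset entropy inequality** (Theorem 1). -/
theorem han_subset_entropy_inequality
    {Ω : Type*} [MeasurableSpace Ω] (μ : Measure Ω) [IsProbabilityMeasure μ]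
    {L : ℕ} (hL : 2 ≤ L) {S : Fin L → Type*} [∀ l, Fintype (S l)]
    [∀ l, MeasurableSpace (S l)] [∀ l, MeasurableSingletonClass (S l)]
    (X : ∀ l, Ω → S l) (hX : ∀ l, Measurable (X l))
    (α : ℕ) (hα1 : 2 ≤ α) (hα2 : α ≤ L) :
    (1 / (Nat.choose L (α - 1) : ℝ)) *
        ∑ V ∈ Finset.powersetCard (α - 1) (Finset.univ : Finset (Fin L)),
          entHset μ X V / ((α : ℝ) - 1) ≥
      (1 / (Nat.choose L α : ℝ)) *
        ∑ U ∈ Finset.powersetCard α (Finset.univ : Finset (Fin L)),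
          entHset μ X U / (α : ℝ) :=
  han_subset_entropy_inequality_general μ X hX α hα1 hα2
end

section
/- Optimality of the greedy rate allocation (core of Theorem 8): Let L ≥ 1, let λ = (λ_1,…,λ_L) with all λ_l ≥ 0, let H_1,…,H_L ≥ 0, let R_0 ≥ 0, and for m ∈ {1,…,L} define g_m(λ) := f_m(λ)·(∑_{α=1}^{m} H_α − R_0) + ∑_{α=m+1}^{L} f_α(λ) H_α. Then: (i) for every m ∈ {1,…,L−1}, g_{m+1}(λ) − g_m(λ) = (f_{m+1}(λ) − f_m(λ))·(∑_{α=1}^{m} H_α − R_0); (ii) if ∑_{α=1}^{q−1} H_α ≤ R_0 ≤ ∑_{α=1}^{q} H_α for some q ∈ {1,…,L}, then max_{1 ≤ m ≤ L} g_m(λ) = g_q(λ); and (iii) if R_0 ≥ ∑_{α=1}^{L} H_α, then max_{1 ≤ m ≤ L} g_m(λ) = g_L(λ) = f_L(λ)·(∑_{α=1}^{L} H_α − R_0) ≤ 0. -/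
/-!
Averaging a feasible weighting of `(α + 1)`-sets over the `α + 1` subsets of size `α` of each set
gives a feasible weighting of `α`-sets with the same total weight, so `f_α` is antitone in `α ≥ 1`.
Hence the increment `g_{m+1} - g_m = (f_{m+1} - f_m) (S_m - R₀)`, with `S_m = H_1 + ⋯ + H_m`,
has the sign of `R₀ - S_m`. As `S_m` increases with `m`, `g` increases while `S_m ≤ R₀` and
decreases afterwards.
-/

/-- `Ω_L^{(α)}`: the collection of all `α`-element subsets of the index set. -/
def OmegaL (L α : ℕ) : Finset (Finset (Fin L)) :=
  Finset.powersetCard α (Finset.univ : Finset (Fin L))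

/-- `f_α(λ)`: the optimal value of the covering linear program. -/
noncomputable def fLP (L : ℕ) (lam : Fin L → ℝ) (α : ℕ) : ℝ :=
  sSup { x : ℝ | ∃ c : Finset (Fin L) → ℝ,
    (∀ U ∈ OmegaL L α, 0 ≤ c U) ∧
    (∀ l : Fin L, ∑ U ∈ (OmegaL L α).filter (fun U => l ∈ U), c U ≤ lam l) ∧
    x = ∑ U ∈ OmegaL L α, c U }

/-- `c` is an optimal solution of the linear program defining `f_α(λ)`. -/
def IsOptimal (L : ℕ) (lam : Fin L → ℝ) (α : ℕ) (c : Finset (Fin L) → ℝ) : Prop :=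
  (∀ U ∈ OmegaL L α, 0 ≤ c U) ∧
  (∀ l : Fin L, ∑ U ∈ (OmegaL L α).filter (fun U => l ∈ U), c U ≤ lam l) ∧
  ∑ U ∈ OmegaL L α, c U = fLP L lam α

/-- `g_m(λ) = f_m(λ)·(∑_{α=1}^m H_α − R₀) + ∑_{α=m+1}^L f_α(λ) H_α`. -/
noncomputable def gGreedy (L : ℕ) (lam : Fin L → ℝ) (H : ℕ → ℝ) (R0 : ℝ) (m : ℕ) : ℝ :=
  fLP L lam m * (∑ α ∈ Finset.Icc 1 m, H α - R0) +
    ∑ α ∈ Finset.Icc (m + 1) L, fLP L lam α * H α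

open Finset

def IsLPFeasible (L : ℕ) (lam : Fin L → ℝ) (α : ℕ) (c : Finset (Fin L) → ℝ) : Prop :=
  (∀ U ∈ OmegaL L α, 0 ≤ c U) ∧
  ∀ l : Fin L, ∑ U ∈ (OmegaL L α).filter (fun U => l ∈ U), c U ≤ lam l

theorem fLP_eq_sSup_image (L : ℕ) (lam : Fin L → ℝ) (α : ℕ) :
    fLP L lam α = sSup ((fun c => ∑ U ∈ OmegaL L α, c U) '' {c | IsLPFeasible L lam α c}) := by
  unfold fLP
  congr 1
  ext x
  exact ⟨fun ⟨c, h0, h1, hx⟩ => ⟨c, ⟨h0, h1⟩, hx.symm⟩, fun ⟨c, ⟨h0, h1⟩, hx⟩ => ⟨c, h0, h1, hx.symm⟩⟩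

-- `sSup` of an empty or unbounded set of reals is `0`.
theorem fLP_nonneg (L : ℕ) (lam : Fin L → ℝ) (α : ℕ) : 0 ≤ fLP L lam α :=
  Real.sSup_nonneg <| by
    rintro _ ⟨c, hc, -, rfl⟩
    exact sum_nonneg hc

theorem isLPFeasible_zero {L : ℕ} {lam : Fin L → ℝ} (hlam : ∀ l, 0 ≤ lam l) (α : ℕ) :
    IsLPFeasible L lam α 0 :=
  ⟨fun _ _ => le_rfl, by simpa using hlam⟩

theorem IsLPFeasible.sum_le {L : ℕ} {lam : Fin L → ℝ} {α : ℕ} {c : Finset (Fin L) → ℝ}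
    (hc : IsLPFeasible L lam α c) (hα : 1 ≤ α) :
    ∑ U ∈ OmegaL L α, c U ≤ ∑ l, lam l :=
  calc ∑ U ∈ OmegaL L α, c U ≤ ∑ U ∈ OmegaL L α, ∑ _l ∈ U, c U := by
        refine sum_le_sum fun U hU => ?_
        rw [sum_const, (mem_powersetCard.1 hU).2, nsmul_eq_mul]
        exact le_mul_of_one_le_left (hc.1 U hU) (by exact_mod_cast hα)
    _ = ∑ l, ∑ U ∈ (OmegaL L α).filter (fun U => l ∈ U), c U :=
        sum_comm' fun U l => by simp
    _ ≤ ∑ l, lam l := sum_le_sum fun l _ => hc.2 l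

theorem bddAbove_lpValues {L : ℕ} (lam : Fin L → ℝ) {α : ℕ} (hα : 1 ≤ α) :
    BddAbove ((fun c => ∑ U ∈ OmegaL L α, c U) '' {c | IsLPFeasible L lam α c}) :=
  ⟨∑ l, lam l, Set.forall_mem_image.2 fun _ hc => IsLPFeasible.sum_le hc hα⟩

noncomputable def shadowAverage (L α : ℕ) (c : Finset (Fin L) → ℝ) (V : Finset (Fin L)) : ℝ :=
  (∑ U ∈ (OmegaL L (α + 1)).filter (fun U => V ⊆ U), c U) / (α + 1)

theorem card_powersetCard_of_mem_OmegaL {L α : ℕ} {U : Finset (Fin L)}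
    (hU : U ∈ OmegaL L (α + 1)) : #(powersetCard α U) = α + 1 := by
  rw [card_powersetCard, (mem_powersetCard.1 hU).2, Nat.choose_succ_self_right]

theorem sum_shadowAverage (L α : ℕ) (c : Finset (Fin L) → ℝ) :
    ∑ V ∈ OmegaL L α, shadowAverage L α c V = ∑ U ∈ OmegaL L (α + 1), c U := by
  unfold shadowAverage
  rw [← sum_div, sum_comm' (t' := OmegaL L (α + 1)) (s' := fun U => powersetCard α U)]
  · simp only [sum_const, nsmul_eq_mul]
    rw [sum_congr rfl fun U hU => by rw [card_powersetCard_of_mem_OmegaL hU], ← mul_sum]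
    push_cast
    field_simp
  · intro V U
    simp only [OmegaL, mem_filter, mem_powersetCard, subset_univ, true_and]
    tauto

theorem IsLPFeasible.shadowAverage {L : ℕ} {lam : Fin L → ℝ} {α : ℕ} {c : Finset (Fin L) → ℝ}
    (hc : IsLPFeasible L lam (α + 1) c) : IsLPFeasible L lam α (shadowAverage L α c) := by
  refine ⟨fun V _ => div_nonneg (sum_nonneg fun U hU => hc.1 U (mem_filter.1 hU).1) (by positivity),
    fun l => ?_⟩
  unfold _root_.shadowAverage
  rw [← sum_div, div_le_iff₀ (by positivity),
    sum_comm' (t' := (OmegaL L (α + 1)).filter (fun U => l ∈ U))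
      (s' := fun U => (powersetCard α U).filter (fun V => l ∈ V))]
  · calc _ ≤ ∑ U ∈ (OmegaL L (α + 1)).filter (fun U => l ∈ U), ((α : ℝ) + 1) * c U := by
          refine sum_le_sum fun U hU => ?_
          have hU := (mem_filter.1 hU).1
          rw [sum_const, nsmul_eq_mul]
          refine mul_le_mul_of_nonneg_right ?_ (hc.1 U hU)
          exact_mod_cast (card_filter_le _ _).trans (card_powersetCard_of_mem_OmegaL hU).le
      _ = ((α : ℝ) + 1) * ∑ U ∈ (OmegaL L (α + 1)).filter (fun U => l ∈ U), c U :=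
          (mul_sum _ _ _).symm
      _ ≤ lam l * (α + 1) := by
          rw [mul_comm]
          exact mul_le_mul_of_nonneg_right (hc.2 l) (by positivity)
  · intro V U
    simp only [OmegaL, mem_filter, mem_powersetCard, subset_univ, true_and]
    constructor
    · rintro ⟨⟨hV, hlV⟩, hU, hVU⟩
      exact ⟨⟨⟨hVU, hV⟩, hlV⟩, hU, hVU hlV⟩
    · rintro ⟨⟨⟨hVU, hV⟩, hlV⟩, hU, -⟩
      exact ⟨⟨hV, hlV⟩, hU, hVU⟩

theorem fLP_succ_le {L : ℕ} {lam : Fin L → ℝ} (hlam : ∀ l, 0 ≤ lam l) {α : ℕ} (hα : 1 ≤ α) :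
    fLP L lam (α + 1) ≤ fLP L lam α := by
  rw [fLP_eq_sSup_image, fLP_eq_sSup_image]
  refine csSup_le ⟨0, 0, isLPFeasible_zero hlam _, by simp⟩ (Set.forall_mem_image.2 fun c hc => ?_)
  rw [← sum_shadowAverage]
  exact le_csSup (bddAbove_lpValues lam hα) (Set.mem_image_of_mem _ hc.shadowAverage)

theorem sum_Icc_one_le_sum_Icc_one {H : ℕ → ℝ} {L : ℕ} (hH : ∀ α ∈ Icc 1 L, 0 ≤ H α)
    {a b : ℕ} (hab : a ≤ b) (hb : b ≤ L) :
    ∑ α ∈ Icc 1 a, H α ≤ ∑ α ∈ Icc 1 b, H α :=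
  sum_le_sum_of_subset_of_nonneg (Icc_subset_Icc_right hab) fun α hα _ =>
    hH α (Icc_subset_Icc_right hb hα)

section gGreedy

variable {L : ℕ} {lam : Fin L → ℝ} {H : ℕ → ℝ} {R0 : ℝ}

theorem gGreedy_succ_sub {m : ℕ} (hm : m < L) :
    gGreedy L lam H R0 (m + 1) - gGreedy L lam H R0 m =
      (fLP L lam (m + 1) - fLP L lam m) * (∑ α ∈ Icc 1 m, H α - R0) := by
  have hIcc : Icc (m + 1) L = insert (m + 1) (Icc (m + 2) L) := by
    ext k
    simp only [mem_Icc, mem_insert]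
    omega
  unfold gGreedy
  rw [sum_Icc_succ_top (by omega), hIcc, sum_insert (by simp)]
  ring

theorem gGreedy_self : gGreedy L lam H R0 L = fLP L lam L * (∑ α ∈ Icc 1 L, H α - R0) := by
  simp [gGreedy]

theorem gGreedy_le_succ (hlam : ∀ l, 0 ≤ lam l) {m : ℕ} (hm : 1 ≤ m) (hmL : m < L)
    (hS : ∑ α ∈ Icc 1 m, H α ≤ R0) :
    gGreedy L lam H R0 m ≤ gGreedy L lam H R0 (m + 1) := by
  rw [← sub_nonneg, gGreedy_succ_sub hmL]
  exact mul_nonneg_of_nonpos_of_nonpos (sub_nonpos.2 (fLP_succ_le hlam hm)) (sub_nonpos.2 hS)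

theorem gGreedy_succ_le (hlam : ∀ l, 0 ≤ lam l) {m : ℕ} (hm : 1 ≤ m) (hmL : m < L)
    (hS : R0 ≤ ∑ α ∈ Icc 1 m, H α) :
    gGreedy L lam H R0 (m + 1) ≤ gGreedy L lam H R0 m := by
  rw [← sub_nonpos, gGreedy_succ_sub hmL]
  exact mul_nonpos_of_nonpos_of_nonneg (sub_nonpos.2 (fLP_succ_le hlam hm)) (sub_nonneg.2 hS)

theorem gGreedy_monotoneOn (hlam : ∀ l, 0 ≤ lam l) {n : ℕ} (hn : n ≤ L)
    (hS : ∀ k, 1 ≤ k → k < n → ∑ α ∈ Icc 1 k, H α ≤ R0) :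
    MonotoneOn (gGreedy L lam H R0) (Set.Icc 1 n) :=
  monotoneOn_of_le_succ Set.ordConnected_Icc fun k _ ⟨hk, _⟩ ⟨_, hkn⟩ => by
    rw [Order.succ_eq_add_one] at hkn ⊢
    exact gGreedy_le_succ hlam hk (by omega) (hS k hk (by omega))

theorem gGreedy_antitoneOn (hlam : ∀ l, 0 ≤ lam l) {q : ℕ} (hq : 1 ≤ q)
    (hS : ∀ k, q ≤ k → k < L → R0 ≤ ∑ α ∈ Icc 1 k, H α) :
    AntitoneOn (gGreedy L lam H R0) (Set.Icc q L) :=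
  antitoneOn_of_succ_le Set.ordConnected_Icc fun k _ ⟨hqk, _⟩ ⟨_, hkL⟩ => by
    rw [Order.succ_eq_add_one] at hkL ⊢
    exact gGreedy_succ_le hlam (by omega) (by omega) (hS k hqk (by omega))

end gGreedy

theorem greedy_rate_allocation_optimal_general
    {L : ℕ} (lam : Fin L → ℝ) (hlam : ∀ l, 0 ≤ lam l)
    (H : ℕ → ℝ) (hH : ∀ α ∈ Finset.Icc 1 L, 0 ≤ H α) (R0 : ℝ) :
    (∀ m : ℕ, 1 ≤ m → m < L →
        gGreedy L lam H R0 (m + 1) - gGreedy L lam H R0 m =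
          (fLP L lam (m + 1) - fLP L lam m) * (∑ α ∈ Finset.Icc 1 m, H α - R0)) ∧
    (∀ q ∈ Finset.Icc 1 L,
        ∑ α ∈ Finset.Icc 1 (q - 1), H α ≤ R0 → R0 ≤ ∑ α ∈ Finset.Icc 1 q, H α →
        ∀ m ∈ Finset.Icc 1 L, gGreedy L lam H R0 m ≤ gGreedy L lam H R0 q) ∧
    (∑ α ∈ Finset.Icc 1 L, H α ≤ R0 →
        (∀ m ∈ Finset.Icc 1 L, gGreedy L lam H R0 m ≤ gGreedy L lam H R0 L) ∧
        gGreedy L lam H R0 L = fLP L lam L * (∑ α ∈ Finset.Icc 1 L, H α - R0) ∧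
        gGreedy L lam H R0 L ≤ 0) := by
  have hS {a b : ℕ} (hab : a ≤ b) (hb : b ≤ L) := sum_Icc_one_le_sum_Icc_one hH hab hb
  refine ⟨fun m _ hm => gGreedy_succ_sub hm, fun q hq hbelow habove m hm => ?_, fun hR => ?_⟩
  · rw [mem_Icc] at hq hm
    rcases le_total m q with hmq | hqm
    · exact gGreedy_monotoneOn hlam hq.2 (fun k _ hk => (hS (by omega) (by omega)).trans hbelow)
        ⟨hm.1, hmq⟩ ⟨hq.1, le_rfl⟩ hmq
    · exact gGreedy_antitoneOn hlam hq.1 (fun k hk _ => habove.trans (hS hk (by omega)))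
        ⟨le_rfl, hq.2⟩ ⟨hqm, hm.2⟩ hqm
  · have hmax : ∀ m ∈ Icc 1 L, gGreedy L lam H R0 m ≤ gGreedy L lam H R0 L := fun m hm => by
      rw [mem_Icc] at hm
      exact gGreedy_monotoneOn hlam le_rfl (fun k _ hk => (hS hk.le le_rfl).trans hR)
        hm ⟨hm.1.trans hm.2, le_rfl⟩ hm.2
    refine ⟨hmax, gGreedy_self, ?_⟩
    rw [gGreedy_self]
    exact mul_nonpos_of_nonneg_of_nonpos (fLP_nonneg L lam L) (by linarith)

/-- **Optimality of the greedy rate allocation at the all-access encoder**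
(core of Theorem 8). -/
theorem greedy_rate_allocation_optimal
    {L : ℕ} (hL : 1 ≤ L) (lam : Fin L → ℝ) (hlam : ∀ l, 0 ≤ lam l)
    (H : ℕ → ℝ) (hH : ∀ α ∈ Finset.Icc 1 L, 0 ≤ H α) (R0 : ℝ) (hR0 : 0 ≤ R0) :
    (∀ m : ℕ, 1 ≤ m → m < L →
        gGreedy L lam H R0 (m + 1) - gGreedy L lam H R0 m =
          (fLP L lam (m + 1) - fLP L lam m) * (∑ α ∈ Finset.Icc 1 m, H α - R0)) ∧
    (∀ q ∈ Finset.Icc 1 L,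
        ∑ α ∈ Finset.Icc 1 (q - 1), H α ≤ R0 → R0 ≤ ∑ α ∈ Finset.Icc 1 q, H α →
        ∀ m ∈ Finset.Icc 1 L, gGreedy L lam H R0 m ≤ gGreedy L lam H R0 q) ∧
    (∑ α ∈ Finset.Icc 1 L, H α ≤ R0 →
        (∀ m ∈ Finset.Icc 1 L, gGreedy L lam H R0 m ≤ gGreedy L lam H R0 L) ∧
        gGreedy L lam H R0 L = fLP L lam L * (∑ α ∈ Finset.Icc 1 L, H α - R0) ∧
        gGreedy L lam H R0 L ≤ 0) :=
  greedy_rate_allocation_optimal_general lam hlam H hH R0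
end
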